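/- Any bijection φ : Q̂ → Q̂ preserving the relation ⊥ in both directions is induced by an element of PGL(2,ℤ): there exists A ∈ GL(2,ℤ) with φ(α) = A·α for all α ∈ Q̂. -/

import Mathlib

/-- The determinant of two integer vectors. -/
def det (v w : ℤ × ℤ) : ℤ := v.1 * w.2 - w.1 * v.2

/-- The unimodular (Farey) relation: determinant `±1`. -/
def FareyPair (v w : ℤ × ℤ) : Prop := det v w = 1 ∨ det v w = -1

/-- Coprime integer pairs. -/
abbrev CP : Type := {v : ℤ × ℤ // IsCoprime v.1 v.2}

instance cpSetoid : Setoid CP where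
  r v w := v.1 = w.1 ∨ v.1 = -w.1
  iseqv := by
    refine ⟨fun _ => Or.inl rfl, ?_, ?_⟩
    · rintro v w (h | h)
      · exact Or.inl h.symm
      · exact Or.inr (by rw [h, neg_neg])
    · rintro u v w (h1 | h1) (h2 | h2)
      · exact Or.inl (h1.trans h2)
      · exact Or.inr (h1.trans h2)
      · exact Or.inr (by rw [h1, h2])
      · exact Or.inl (by rw [h1, h2, neg_neg])

/-- `Q̂ = Q ∪ {∞}`: coprime integer pairs up to sign. -/
def Qhat : Type := Quotient cpSetoid

def Qhat.mk (v : ℤ × ℤ) (h : IsCoprime v.1 v.2) : Qhat := ⟦⟨v, h⟩⟧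

lemma det_neg_left (v w : ℤ × ℤ) : det (-v) w = -(det v w) := by
  simp only [det, Prod.fst_neg, Prod.snd_neg]; ring

lemma det_neg_right (v w : ℤ × ℤ) : det v (-w) = -(det v w) := by
  simp only [det, Prod.fst_neg, Prod.snd_neg]; ring

lemma fareyPair_neg_left (v w : ℤ × ℤ) : FareyPair (-v) w ↔ FareyPair v w := by
  unfold FareyPair; rw [det_neg_left]; omega

lemma fareyPair_neg_right (v w : ℤ × ℤ) : FareyPair v (-w) ↔ FareyPair v w := by
  unfold FareyPair; rw [det_neg_right]; omega

lemma farey_well {a b a' b' : CP} (ha : a ≈ a') (hb : b ≈ b') :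
    FareyPair a.1 b.1 ↔ FareyPair a'.1 b'.1 := by
  rcases ha with h | h <;> rcases hb with h' | h' <;> rw [h, h'] <;>
    simp [fareyPair_neg_left, fareyPair_neg_right]

/-- The Farey relation on `Q̂`. -/
def Frel : Qhat → Qhat → Prop :=
  Quotient.lift₂ (fun v w : CP => FareyPair v.1 w.1)
    (fun _ _ _ _ ha hb => propext (farey_well ha hb))

/-- The product (signed mediant): for `λ = det v w`, `(p + λ p', q + λ q')`. -/
def fmul (v w : ℤ × ℤ) : ℤ × ℤ := (v.1 + det v w * w.1, v.2 + det v w * w.2)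

lemma isCoprime_of_det {v w : ℤ × ℤ} (h : det v w = 1 ∨ det v w = -1) :
    IsCoprime v.1 v.2 := by
  rcases h with h | h
  · exact ⟨w.2, -w.1, by simp only [det] at h; linarith [h]⟩
  · exact ⟨-w.2, w.1, by simp only [det] at h; linarith [h]⟩

lemma isCoprime_fmul {v w : ℤ × ℤ} (h : FareyPair v w) :
    IsCoprime (fmul v w).1 (fmul v w).2 := by
  have h2 : det v w * det v w = 1 := by rcases h with h | h <;> rw [h] <;> ring
  refine ⟨det v w * w.2, -(det v w * w.1), ?_⟩
  simp only [fmul, det] at h2 ⊢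
  linear_combination h2

/-- The product on `Q̂`, defined for Farey-related representatives. -/
def qprod (v w : CP) (h : FareyPair v.1 w.1) : Qhat :=
  Qhat.mk (fmul v.1 w.1) (isCoprime_fmul h)

/-- Height `|p| + |q|` on `Q̂`. -/
def qheight : Qhat → ℕ :=
  Quotient.lift (fun v : CP => v.1.1.natAbs + v.1.2.natAbs)
    (by rintro v w (h | h) <;>
      simp only [h, Prod.fst_neg, Prod.snd_neg, Int.natAbs_neg])

/-- Action of an integer matrix on `ℤ × ℤ`. -/
def matAct (A : Matrix (Fin 2) (Fin 2) ℤ) (v : ℤ × ℤ) : ℤ × ℤ :=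
  (A 0 0 * v.1 + A 0 1 * v.2, A 1 0 * v.1 + A 1 1 * v.2)

lemma det_matAct (A : Matrix (Fin 2) (Fin 2) ℤ) (v w : ℤ × ℤ) :
    det (matAct A v) (matAct A w) = A.det * det v w := by
  simp only [matAct, det, Matrix.det_fin_two]; ring

lemma isCoprime_matAct (A : GL (Fin 2) ℤ) (v : ℤ × ℤ) (h : IsCoprime v.1 v.2) :
    IsCoprime (matAct (A : Matrix (Fin 2) (Fin 2) ℤ) v).1
      (matAct (A : Matrix (Fin 2) (Fin 2) ℤ) v).2 := by
  obtain ⟨x, y, hxy⟩ := h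
  have hdv : det v (-y, x) = 1 := by simp only [det]; linarith [hxy]
  have hdA : (A : Matrix (Fin 2) (Fin 2) ℤ).det = 1 ∨
      (A : Matrix (Fin 2) (Fin 2) ℤ).det = -1 := by
    have : IsUnit (A : Matrix (Fin 2) (Fin 2) ℤ).det :=
      (Matrix.isUnit_iff_isUnit_det _).mp A.isUnit
    rwa [Int.isUnit_iff] at this
  apply isCoprime_of_det (w := matAct (A : Matrix (Fin 2) (Fin 2) ℤ) (-y, x))
  rw [det_matAct, hdv, mul_one]
  exact hdA

lemma matAct_neg (A : Matrix (Fin 2) (Fin 2) ℤ) (v : ℤ × ℤ) :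
    matAct A (-v) = -(matAct A v) := by
  simp only [matAct, Prod.fst_neg, Prod.snd_neg, Prod.neg_mk, Prod.mk.injEq]
  constructor <;> ring

/-- The action of `GL(2,ℤ)` on `Q̂`. -/
def qAct (A : GL (Fin 2) ℤ) : Qhat → Qhat :=
  Quotient.lift
    (fun v : CP => (⟦⟨matAct (A : Matrix (Fin 2) (Fin 2) ℤ) v.1,
      isCoprime_matAct A v.1 v.2⟩⟧ : Qhat))
    (by
      rintro v w (h | h)
      · exact Quotient.sound
          (Or.inl (congrArg (matAct (A : Matrix (Fin 2) (Fin 2) ℤ)) h))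
      · refine Quotient.sound (Or.inr ?_)
        show matAct (A : Matrix (Fin 2) (Fin 2) ℤ) v.1 =
          -(matAct (A : Matrix (Fin 2) (Fin 2) ℤ) w.1)
        rw [h, matAct_neg])

lemma isCoprime_one_zero : IsCoprime (1 : ℤ) (0 : ℤ) := isCoprime_one_left
lemma isCoprime_zero_one : IsCoprime (0 : ℤ) (1 : ℤ) := isCoprime_one_right
lemma isCoprime_one_one : IsCoprime (1 : ℤ) (1 : ℤ) := isCoprime_one_left

/-- The point `∞ = (1,0)`. -/
def qinf : Qhat := Qhat.mk (1, 0) isCoprime_one_zero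
/-- The point `0 = (0,1)`. -/
def qzero : Qhat := Qhat.mk (0, 1) isCoprime_zero_one
/-- The point `1 = (1,1)`. -/
def qone : Qhat := Qhat.mk (1, 1) isCoprime_one_one

section Aux

lemma frel_mk (v w : ℤ × ℤ) (hv : IsCoprime v.1 v.2) (hw : IsCoprime w.1 w.2) :
    Frel (Qhat.mk v hv) (Qhat.mk w hw) ↔ FareyPair v w := Iff.rfl

lemma qhat_mk_eq {v w : ℤ × ℤ} (hv : IsCoprime v.1 v.2) (hw : IsCoprime w.1 w.2) :
    Qhat.mk v hv = Qhat.mk w hw ↔ (v = w ∨ v = -w) := by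
  unfold Qhat.mk
  show (⟦⟨v, hv⟩⟧ : Quotient cpSetoid) = ⟦⟨w, hw⟩⟧ ↔ _; rw [Quotient.eq]
  exact Iff.rfl

lemma mk_eq_mk_of {v w : ℤ × ℤ} (hv : IsCoprime v.1 v.2) (hw : IsCoprime w.1 w.2)
    (h : v = w ∨ v = -w) : Qhat.mk v hv = Qhat.mk w hw := (qhat_mk_eq hv hw).mpr h

lemma decomp {β γ u : ℤ × ℤ} (h : FareyPair β γ) (h1 : FareyPair u β) (h2 : FareyPair u γ) :
    (u = (β.1 + γ.1, β.2 + γ.2) ∨ u = -(β.1 + γ.1, β.2 + γ.2)) ∨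
    (u = (β.1 - γ.1, β.2 - γ.2) ∨ u = -(β.1 - γ.1, β.2 - γ.2)) := by
  have key1 : det β γ * u.1 = det u γ * β.1 + det β u * γ.1 := by simp only [det]; ring
  have key2 : det β γ * u.2 = det u γ * β.2 + det β u * γ.2 := by simp only [det]; ring
  have hbu : det β u = 1 ∨ det β u = -1 := by
    rcases h1 with h1 | h1
    · right; simp only [det] at h1 ⊢; linarith
    · left; simp only [det] at h1 ⊢; linarith
  rcases h with h | h <;> rcases h2 with h2 | h2 <;> rcases hbu with hb | hb <;>
    rw [h, h2, hb] at key1 key2 <;>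
    simp only [Prod.ext_iff, Prod.fst_neg, Prod.snd_neg] <;> omega

lemma cop_add {β γ : ℤ × ℤ} (h : FareyPair β γ) : IsCoprime (β.1 + γ.1) (β.2 + γ.2) := by
  refine isCoprime_of_det (v := (β.1 + γ.1, β.2 + γ.2)) (w := γ) ?_
  rcases h with h | h
  · left; simp only [det] at h ⊢; linarith
  · right; simp only [det] at h ⊢; linarith

lemma cop_sub {β γ : ℤ × ℤ} (h : FareyPair β γ) : IsCoprime (β.1 - γ.1) (β.2 - γ.2) := by
  refine isCoprime_of_det (v := (β.1 - γ.1, β.2 - γ.2)) (w := γ) ?_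
  rcases h with h | h
  · left; simp only [det] at h ⊢; linarith
  · right; simp only [det] at h ⊢; linarith

end Aux
lemma psi_congr {ψ : Qhat → Qhat} {a b : Qhat} (h : ψ a = a) (e : b = a) : ψ b = b := by
  rw [e]; exact h

lemma fix_all (ψ : Qhat → Qhat) (hbij : Function.Bijective ψ)
    (hrel : ∀ α β, Frel α β ↔ Frel (ψ α) (ψ β))
    (hinf : ψ qinf = qinf) (hzero : ψ qzero = qzero) (hone : ψ qone = qone) :
    ∀ α, ψ α = α := by
  have key : ∀ (β γ : ℤ × ℤ) (hfg : FareyPair β γ)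
      (hb : IsCoprime β.1 β.2) (hc : IsCoprime γ.1 γ.2),
      ψ (Qhat.mk β hb) = Qhat.mk β hb →
      ψ (Qhat.mk γ hc) = Qhat.mk γ hc →
      ψ (Qhat.mk (β.1 - γ.1, β.2 - γ.2) (cop_sub hfg)) =
        Qhat.mk (β.1 - γ.1, β.2 - γ.2) (cop_sub hfg) →
      ψ (Qhat.mk (β.1 + γ.1, β.2 + γ.2) (cop_add hfg)) =
        Qhat.mk (β.1 + γ.1, β.2 + γ.2) (cop_add hfg) := by
    intro β γ hfg hb hc hβ hγ hsub
    obtain ⟨⟨u, hu⟩, hurep⟩ :=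
      Quotient.exists_rep (ψ (Qhat.mk (β.1 + γ.1, β.2 + γ.2) (cop_add hfg)))
    have f1 : Frel (Qhat.mk (β.1 + γ.1, β.2 + γ.2) (cop_add hfg)) (Qhat.mk β hb) := by
      show FareyPair (β.1 + γ.1, β.2 + γ.2) β
      rcases hfg with h | h
      · right; simp only [det] at h ⊢; linarith
      · left; simp only [det] at h ⊢; linarith
    have f2 : Frel (Qhat.mk (β.1 + γ.1, β.2 + γ.2) (cop_add hfg)) (Qhat.mk γ hc) := by
      show FareyPair (β.1 + γ.1, β.2 + γ.2) γ
      rcases hfg with h | h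
      · left; simp only [det] at h ⊢; linarith
      · right; simp only [det] at h ⊢; linarith
    have hub : FareyPair u β := by
      have h1 := (hrel _ _).mp f1
      rw [hβ, ← hurep] at h1
      exact h1
    have huc : FareyPair u γ := by
      have h1 := (hrel _ _).mp f2
      rw [hγ, ← hurep] at h1
      exact h1
    have hdec := decomp hfg hub huc
    rcases hdec with (h | h) | (h | h)
    · rw [← hurep]
      exact mk_eq_mk_of hu (cop_add hfg) (Or.inl h)
    · rw [← hurep]
      exact mk_eq_mk_of hu (cop_add hfg) (Or.inr h)
    all_goals {
      exfalso
      have heq : ψ (Qhat.mk (β.1 + γ.1, β.2 + γ.2) (cop_add hfg)) =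
          ψ (Qhat.mk (β.1 - γ.1, β.2 - γ.2) (cop_sub hfg)) := by
        rw [hsub, ← hurep]
        first
        | exact mk_eq_mk_of hu (cop_sub hfg) (Or.inl h)
        | exact mk_eq_mk_of hu (cop_sub hfg) (Or.inr h)
      have heq2 := hbij.1 heq
      rw [qhat_mk_eq] at heq2
      have hzz : (γ.1 = 0 ∧ γ.2 = 0) ∨ (β.1 = 0 ∧ β.2 = 0) := by
        rcases heq2 with h2 | h2 <;>
          simp only [Prod.ext_iff, Prod.fst_neg, Prod.snd_neg] at h2 <;> omega
      rcases hzz with ⟨h1, h2⟩ | ⟨h1, h2⟩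
      · rw [h1, h2] at hc; exact not_isCoprime_zero_zero hc
      · rw [h1, h2] at hb; exact not_isCoprime_zero_zero hb }
  -- the integer line
  have hcop1 : ∀ n : ℤ, IsCoprime n (1 : ℤ) := fun n => isCoprime_one_right
  have hline : ∀ k : ℕ, ∀ n : ℤ, n.natAbs = k →
      ψ (Qhat.mk (n, 1) (hcop1 n)) = Qhat.mk (n, 1) (hcop1 n) := by
    intro k
    induction k using Nat.strong_induction_on with
    | _ k IH =>
      intro n hk
      have h0 : n = 0 ∨ n = 1 ∨ n = -1 ∨ 2 ≤ n ∨ n ≤ -2 := by omega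
      rcases h0 with h | h | h | h | h
      · subst h; exact hzero
      · subst h; exact hone
      · subst h
        have hfg : FareyPair ((1 : ℤ), (0 : ℤ)) ((0 : ℤ), (-1 : ℤ)) := by
          right; decide
        have hres := key (1, 0) (0, -1) hfg isCoprime_one_zero
          (isCoprime_zero_one.neg_right)
          hinf
          (psi_congr hzero (mk_eq_mk_of _ isCoprime_zero_one (Or.inr (by decide))))
          (psi_congr hone (mk_eq_mk_of _ isCoprime_one_one (Or.inl (by decide))))
        exact psi_congr hres (mk_eq_mk_of _ _ (Or.inr (by decide)))
      · -- 2 ≤ n : β = (1,0), γ = (n-1,1)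
        have hfg : FareyPair ((1 : ℤ), (0 : ℤ)) (n - 1, (1 : ℤ)) := by
          left; simp [det]
        have hres := key (1, 0) (n - 1, 1) hfg isCoprime_one_zero (hcop1 (n - 1))
          hinf
          (IH (n - 1).natAbs (by omega) (n - 1) rfl)
          (psi_congr (IH (n - 2).natAbs (by omega) (n - 2) rfl)
            (mk_eq_mk_of _ _ (Or.inr (by
              simp only [Prod.ext_iff, Prod.fst_neg, Prod.snd_neg]; omega))))
        exact psi_congr hres (mk_eq_mk_of _ _ (Or.inl (by
          simp only [Prod.ext_iff]; omega)))
      · -- n ≤ -2 : β = (-1,0), γ = (n+1,1)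
        have hfg : FareyPair ((-1 : ℤ), (0 : ℤ)) (n + 1, (1 : ℤ)) := by
          right; simp [det]
        have hres := key (-1, 0) (n + 1, 1) hfg isCoprime_one_zero.neg_left (hcop1 (n + 1))
          (psi_congr hinf (mk_eq_mk_of _ isCoprime_one_zero (Or.inr (by decide))))
          (IH (n + 1).natAbs (by omega) (n + 1) rfl)
          (psi_congr (IH (n + 2).natAbs (by omega) (n + 2) rfl)
            (mk_eq_mk_of _ _ (Or.inr (by
              simp only [Prod.ext_iff, Prod.fst_neg, Prod.snd_neg]; omega))))
        exact psi_congr hres (mk_eq_mk_of _ _ (Or.inl (by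
          simp only [Prod.ext_iff]; omega)))
  -- main induction on the denominator
  have main : ∀ k : ℕ, ∀ v : ℤ × ℤ, ∀ hv : IsCoprime v.1 v.2, v.2.natAbs = k →
      ψ (Qhat.mk v hv) = Qhat.mk v hv := by
    intro k
    induction k using Nat.strong_induction_on with
    | _ k IH =>
      have pos : ∀ p q : ℤ, 2 ≤ q → q.natAbs = k → ∀ hv : IsCoprime p q,
          ψ (Qhat.mk (p, q) hv) = Qhat.mk (p, q) hv := by
        intro p q hq hk hv
        obtain ⟨a, b, hab⟩ := id hv
        have hs0 : 0 ≤ a % q := Int.emod_nonneg a (by omega)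
        have hslt : a % q < q := Int.emod_lt_of_pos a (by omega)
        have hps' : p * (a % q) - q * (-b - p * (a / q)) = 1 := by
          rw [Int.emod_def]; linear_combination hab
        have hsne : a % q ≠ 0 := by
          intro hzz
          rw [hzz] at hps'
          have h1 : q * (-(-b - p * (a / q))) = 1 := by linarith
          have := Int.isUnit_iff.mp (IsUnit.of_mul_eq_one _ h1)
          omega
        obtain ⟨s, r, hps, hs1, hs2⟩ : ∃ s r : ℤ, p * s - q * r = 1 ∧ 0 < s ∧ s < q :=
          ⟨a % q, -b - p * (a / q), hps', by omega, hslt⟩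
        have hfg : FareyPair (r, s) (p - r, q - s) := by
          right; simp only [det]; linear_combination -hps
        have hb : IsCoprime r s :=
          isCoprime_of_det (v := (r, s)) (w := (p, q))
            (Or.inr (by simp only [det]; linear_combination -hps))
        have hc : IsCoprime (p - r) (q - s) :=
          isCoprime_of_det (v := (p - r, q - s)) (w := (r, s))
            (Or.inl (by simp only [det]; linear_combination hps))
        have hres := key (r, s) (p - r, q - s) hfg hb hc
          (IH s.natAbs (by omega) (r, s) hb rfl)
          (IH (q - s).natAbs (by omega) (p - r, q - s) hc rfl)
          (IH (s - (q - s)).natAbs (by omega) (r - (p - r), s - (q - s)) (cop_sub hfg) rfl)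
        exact psi_congr hres (mk_eq_mk_of _ _ (Or.inl (by
          simp only [Prod.ext_iff]; constructor <;> [skip; skip] <;> omega)))
      intro v hv hk
      have h0 : v.2 = 0 ∨ v.2 = 1 ∨ v.2 = -1 ∨ 2 ≤ v.2 ∨ v.2 ≤ -2 := by omega
      rcases h0 with h | h | h | h | h
      · rcases Int.isUnit_iff.mp (isCoprime_zero_right.mp (h ▸ hv)) with h1 | h1
        · exact psi_congr hinf (mk_eq_mk_of hv isCoprime_one_zero
            (Or.inl (Prod.ext_iff.mpr ⟨h1, h⟩)))
        · exact psi_congr hinf (mk_eq_mk_of hv isCoprime_one_zero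
            (Or.inr (by simp only [Prod.ext_iff, Prod.fst_neg, Prod.snd_neg]; omega)))
      · exact psi_congr (hline v.1.natAbs v.1 rfl) (mk_eq_mk_of _ _
          (Or.inl (Prod.ext_iff.mpr ⟨rfl, h⟩)))
      · exact psi_congr (hline (-v.1).natAbs (-v.1) rfl) (mk_eq_mk_of _ _
          (Or.inr (by simp only [Prod.ext_iff, Prod.fst_neg, Prod.snd_neg]; omega)))
      · exact pos v.1 v.2 h hk hv
      · exact psi_congr (pos (-v.1) (-v.2) (by omega) (by omega)
          (hv.neg_left.neg_right)) (mk_eq_mk_of _ _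
            (Or.inr (by simp only [Prod.ext_iff, Prod.fst_neg, Prod.snd_neg]; omega)))
  intro α
  obtain ⟨⟨v, hv⟩, rfl⟩ := Quotient.exists_rep α
  exact main v.2.natAbs v hv rfl
lemma gl_det_pm (A : GL (Fin 2) ℤ) :
    (A : Matrix (Fin 2) (Fin 2) ℤ).det = 1 ∨ (A : Matrix (Fin 2) (Fin 2) ℤ).det = -1 := by
  have : IsUnit (A : Matrix (Fin 2) (Fin 2) ℤ).det :=
    (Matrix.isUnit_iff_isUnit_det _).mp A.isUnit
  rwa [Int.isUnit_iff] at this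

lemma matAct_mul (A B : Matrix (Fin 2) (Fin 2) ℤ) (v : ℤ × ℤ) :
    matAct (A * B) v = matAct A (matAct B v) := by
  simp only [matAct, Matrix.mul_apply, Fin.sum_univ_two, Prod.mk.injEq]
  constructor <;> ring

lemma matAct_one (v : ℤ × ℤ) : matAct (1 : Matrix (Fin 2) (Fin 2) ℤ) v = v := by
  simp [matAct, Matrix.one_apply]

lemma qAct_inv_qAct (A : GL (Fin 2) ℤ) (x : Qhat) : qAct A⁻¹ (qAct A x) = x := by
  obtain ⟨⟨v, hv⟩, rfl⟩ := Quotient.exists_rep x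
  refine mk_eq_mk_of _ hv (Or.inl ?_)
  rw [← matAct_mul, ← Units.val_mul]
  rw [show A⁻¹ * A = 1 from by group]
  rw [Units.val_one, matAct_one]

lemma qAct_act_inv (A : GL (Fin 2) ℤ) (x : Qhat) : qAct A (qAct A⁻¹ x) = x := by
  have := qAct_inv_qAct A⁻¹ x
  rwa [inv_inv] at this

lemma frel_qAct (A : GL (Fin 2) ℤ) (x y : Qhat) : Frel (qAct A x) (qAct A y) ↔ Frel x y := by
  obtain ⟨⟨v, hv⟩, rfl⟩ := Quotient.exists_rep x
  obtain ⟨⟨w, hw⟩, rfl⟩ := Quotient.exists_rep y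
  show FareyPair (matAct _ v) (matAct _ w) ↔ FareyPair v w
  unfold FareyPair
  rcases gl_det_pm A with h | h <;> rw [det_matAct, h]
  · simp only [one_mul]
  · simp only [neg_one_mul]; omega
theorem stmt_17 (φ : Qhat → Qhat) (hbij : Function.Bijective φ)
    (hrel : ∀ α β : Qhat, Frel α β ↔ Frel (φ α) (φ β)) :
    ∃ A : GL (Fin 2) ℤ, ∀ α, φ α = qAct A α := by
  obtain ⟨⟨v, hv⟩, hvrep⟩ := Quotient.exists_rep (φ qinf)
  obtain ⟨⟨w, hw⟩, hwrep⟩ := Quotient.exists_rep (φ qzero)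
  obtain ⟨⟨u, hu⟩, hurep⟩ := Quotient.exists_rep (φ qone)
  have fvw : FareyPair v w := by
    have h1 := (hrel qinf qzero).mp (show FareyPair (1, 0) (0, 1) from Or.inl (by decide))
    rw [← hvrep, ← hwrep] at h1; exact h1
  have fuv : FareyPair u v := by
    have h1 := (hrel qone qinf).mp (show FareyPair (1, 1) (1, 0) from Or.inr (by decide))
    rw [← hurep, ← hvrep] at h1; exact h1
  have fuw : FareyPair u w := by
    have h1 := (hrel qone qzero).mp (show FareyPair (1, 1) (0, 1) from Or.inl (by decide))
    rw [← hurep, ← hwrep] at h1; exact h1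
  obtain ⟨w', hww', hfvw', hclass⟩ : ∃ w' : ℤ × ℤ, (w' = w ∨ w' = -w) ∧ FareyPair v w' ∧
      (u = (v.1 + w'.1, v.2 + w'.2) ∨ u = -(v.1 + w'.1, v.2 + w'.2)) := by
    rcases decomp fvw fuv fuw with (h | h) | (h | h)
    · exact ⟨w, Or.inl rfl, fvw, Or.inl h⟩
    · exact ⟨w, Or.inl rfl, fvw, Or.inr h⟩
    · refine ⟨-w, Or.inr rfl, (fareyPair_neg_right v w).mpr fvw, Or.inl ?_⟩
      rw [h]; simp only [Prod.fst_neg, Prod.snd_neg, Prod.mk.injEq]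
      omega
    · refine ⟨-w, Or.inr rfl, (fareyPair_neg_right v w).mpr fvw, Or.inr ?_⟩
      rw [h]; simp only [Prod.fst_neg, Prod.snd_neg, Prod.neg_mk, Prod.mk.injEq]
      omega
  have hw' : IsCoprime w'.1 w'.2 := by
    rcases hww' with h | h
    · rw [h]; exact hw
    · rw [h]; exact hw.neg_left.neg_right
  -- build the matrix
  have hdetA : (!![v.1, w'.1; v.2, w'.2] : Matrix (Fin 2) (Fin 2) ℤ).det = det v w' := by
    rw [Matrix.det_fin_two_of]; simp only [det]
  have he2 : det v w' * (!![v.1, w'.1; v.2, w'.2] : Matrix (Fin 2) (Fin 2) ℤ).det = 1 := by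
    rw [hdetA]; rcases hfvw' with h | h <;> rw [h] <;> ring
  obtain ⟨A, hA⟩ : ∃ A : GL (Fin 2) ℤ,
      (A : Matrix (Fin 2) (Fin 2) ℤ) = !![v.1, w'.1; v.2, w'.2] := by
    refine ⟨⟨!![v.1, w'.1; v.2, w'.2],
      det v w' • Matrix.adjugate !![v.1, w'.1; v.2, w'.2], ?_, ?_⟩, rfl⟩
    · rw [Matrix.mul_smul, Matrix.mul_adjugate, smul_smul, he2, one_smul]
    · rw [Matrix.smul_mul, Matrix.adjugate_mul, smul_smul, he2, one_smul]
  have hact : ∀ x : ℤ × ℤ, matAct (A : Matrix (Fin 2) (Fin 2) ℤ) x =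
      (v.1 * x.1 + w'.1 * x.2, v.2 * x.1 + w'.2 * x.2) := by
    intro x; rw [hA]; simp [matAct]
  -- the three fixed points
  have hAinf : qAct A qinf = φ qinf := by
    rw [← hvrep]
    refine mk_eq_mk_of _ hv (Or.inl ?_)
    rw [hact]; simp
  have hAzero : qAct A qzero = φ qzero := by
    rw [← hwrep]
    rcases hww' with h | h
    · refine mk_eq_mk_of _ hw (Or.inl ?_)
      rw [hact]; simp [← h]
    · refine mk_eq_mk_of _ hw (Or.inr ?_)
      rw [hact, h]; simp only [Prod.ext_iff, Prod.fst_neg, Prod.snd_neg]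
      constructor <;> ring
  have hAone : qAct A qone = φ qone := by
    rw [← hurep]
    rcases hclass with h | h
    · refine mk_eq_mk_of _ hu (Or.inl ?_)
      rw [hact, h]; simp only [Prod.mk.injEq]; constructor <;> ring
    · refine mk_eq_mk_of _ hu (Or.inr ?_)
      rw [hact, h]; simp only [Prod.neg_mk, Prod.mk.injEq]; constructor <;> ring
  -- normalize and apply rigidity
  have hψbij : Function.Bijective (fun x => qAct A⁻¹ (φ x)) := by
    constructor
    · intro x y hxy
      apply hbij.1
      have := congrArg (qAct A) hxy
      simpa only [qAct_act_inv] using this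
    · intro y
      obtain ⟨x, hx⟩ := hbij.2 (qAct A y)
      exact ⟨x, by simp only [hx, qAct_inv_qAct]⟩
  have hψrel : ∀ α β, Frel α β ↔ Frel (qAct A⁻¹ (φ α)) (qAct A⁻¹ (φ β)) :=
    fun α β => (hrel α β).trans (frel_qAct A⁻¹ _ _).symm
  have hψ := fix_all (fun x => qAct A⁻¹ (φ x)) hψbij hψrel
    (by simp only [← hAinf, qAct_inv_qAct])
    (by simp only [← hAzero, qAct_inv_qAct])
    (by simp only [← hAone, qAct_inv_qAct])
  refine ⟨A, fun α => ?_⟩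
  have h1 := congrArg (qAct A) (hψ α)
  rwa [qAct_act_inv] at h1
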